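/- Let n ≥ 3 and λ_1, …, λ_n ∈ ℝ. For u = (u^+_{a,b})_{1≤a≤b≤n-1} ∈ ℝ^{n(n-1)/2} define, for 1 ≤ i ≤ j < n−1, ψ(u)^+_{i,j} = Σ_{k=i}^{n} λ_k + Σ_{k=j+1}^{n-2} λ_k − u^+_{i,j} − Σ_{k=i+1}^{j} u^+_{k,j} − Σ_{k=j+1}^{n-1} (u^+_{i,k} + u^+_{j+1,k}), and for j = n−1, ψ(u)^+_{i,n-1} = Σ_{k=i}^{n-2} λ_k + λ_n + Σ_{k=n}^{n-2} λ_k − u^+_{i,n-1} − Σ_{k=i+1}^{n-1} u^+_{k,n-1}. Then: (a) for 1 ≤ i < j ≤ n−1, ψ(u)^+_{i,j} ≥ ψ(u)^+_{i+1,j} if and only if Σ_{k=j}^{n-1} u^+_{i,k} ≤ Σ_{k=j+1}^{n-1} u^+_{i+1,k} + λ_i; (b) for 1 ≤ i ≤ j < n−1, ψ(u)^+_{i,j} ≥ ψ(u)^+_{i,j+1} if and only if Σ_{k=i}^{j} u^+_{k,j} + Σ_{k=j+2}^{n-1} u^+_{j+1,k} ≤ Σ_{k=i+1}^{j} u^+_{k,j+1}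 + Σ_{k=j+2}^{n-1} u^+_{j+2,k} + λ_{j+1}; (c) ψ(u)^+_{n-1,n-1} ≥ 0 if and only if u^+_{n-1,n-1} ≤ λ_n. -/
import Mathlib


noncomputable section

open Finset

private lemma sum_bot' {a b : ℕ} (h : a ≤ b) (f : ℕ → ℝ) :
    ∑ k ∈ Icc a b, f k = f a + ∑ k ∈ Icc (a + 1) b, f k := by
  rw [Finset.Icc_eq_cons_Ioc h, Finset.sum_cons, Finset.Icc_add_one_left_eq_Ioc]

private lemma sum_top' {a b : ℕ} (h : a ≤ b + 1) (f : ℕ → ℝ) :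
    ∑ k ∈ Icc a (b + 1), f k = (∑ k ∈ Icc a b, f k) + f (b + 1) :=
  Finset.sum_Icc_succ_top h f

/-- The map `ψ` (Morier-Genoud's string–Lusztig transformation, specialized to the second half
of the word `i^{D_n}`): for `1 ≤ i ≤ j < n−1`,
`ψ(u)^+_{i,j} = Σ_{k=i}^{n} λ_k + Σ_{k=j+1}^{n-2} λ_k − u^+_{i,j} − Σ_{k=i+1}^{j} u^+_{k,j}
  − Σ_{k=j+1}^{n-1} (u^+_{i,k} + u^+_{j+1,k})`, and for `j = n−1`,
`ψ(u)^+_{i,n-1} = Σ_{k=i}^{n-2} λ_k + λ_n + Σ_{k=n}^{n-2} λ_k − u^+_{i,n-1}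
  − Σ_{k=i+1}^{n-1} u^+_{k,n-1}`. -/
def psiD (n : ℕ) (lam : ℕ → ℝ) (u : ℕ → ℕ → ℝ) (i j : ℕ) : ℝ :=
  if j = n - 1 then
    (∑ k ∈ Icc i (n - 2), lam k) + lam n + (∑ k ∈ Icc n (n - 2), lam k)
      - u i (n - 1) - ∑ k ∈ Icc (i + 1) (n - 1), u k (n - 1)
  else
    (∑ k ∈ Icc i n, lam k) + (∑ k ∈ Icc (j + 1) (n - 2), lam k)
      - u i j - (∑ k ∈ Icc (i + 1) j, u k j)
      - ∑ k ∈ Icc (j + 1) (n - 1), (u i k + u (j + 1) k)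

/-- the explicit equivalences between inequalities for `ψ(u)` and the defining
inequalities of the Lusztig branching polytope of type `Dₙ`. -/
theorem stmt_10 (n : ℕ) (hn : 3 ≤ n) (lam : ℕ → ℝ) (u : ℕ → ℕ → ℝ) :
    (∀ i j, 1 ≤ i → i < j → j ≤ n - 1 →
      (psiD n lam u (i + 1) j ≤ psiD n lam u i j ↔
        ∑ k ∈ Icc j (n - 1), u i k ≤ (∑ k ∈ Icc (j + 1) (n - 1), u (i + 1) k) + lam i)) ∧
    (∀ i j, 1 ≤ i → i ≤ j → j < n - 1 →
      (psiD n lam u i (j + 1) ≤ psiD n lam u i j ↔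
        (∑ k ∈ Icc i j, u k j) + ∑ k ∈ Icc (j + 2) (n - 1), u (j + 1) k ≤
          (∑ k ∈ Icc (i + 1) j, u k (j + 1)) +
            (∑ k ∈ Icc (j + 2) (n - 1), u (j + 2) k) + lam (j + 1))) ∧
    (0 ≤ psiD n lam u (n - 1) (n - 1) ↔ u (n - 1) (n - 1) ≤ lam n) := by
  obtain ⟨m, rfl⟩ : ∃ m, n = m + 3 := ⟨n - 3, by omega⟩
  have h1 : m + 3 - 1 = m + 2 := rfl
  have h2 : m + 3 - 2 = m + 1 := rfl
  refine ⟨?_, ?_, ?_⟩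
  · -- part (a)
    intro i j hi hij hj
    rw [h1] at hj
    simp only [psiD, h1, h2, Nat.add_assoc, Nat.reduceAdd]
    rcases eq_or_lt_of_le hj with rfl | hj'
    · -- j = m + 2
      simp only [eq_self_iff_true, if_true]
      have a1 : ∑ k ∈ Icc i (m + 1), lam k
          = lam i + ∑ k ∈ Icc (i + 1) (m + 1), lam k := sum_bot' (by omega) lam
      have a2 : ∑ k ∈ Icc (i + 1) (m + 2), u k (m + 2)
          = u (i + 1) (m + 2) + ∑ k ∈ Icc (i + 2) (m + 2), u k (m + 2) :=
        sum_bot' (by omega) _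
      have a3 : ∑ k ∈ Icc (m + 2) (m + 2), u i k = u i (m + 2) := by
        rw [Finset.Icc_self, Finset.sum_singleton]
      have a4 : ∑ k ∈ Icc (m + 3) (m + 2), u (i + 1) k = 0 := by
        rw [Finset.Icc_eq_empty (by omega), Finset.sum_empty]
      constructor <;> intro h <;> linarith
    · -- j < m + 2
      have hne : ¬(j = m + 2) := by omega
      rw [if_neg hne, if_neg hne]
      have e1 : ∑ k ∈ Icc i (m + 3), lam k
          = lam i + ∑ k ∈ Icc (i + 1) (m + 3), lam k := sum_bot' (by omega) lam
      have e2 : ∑ k ∈ Icc (i + 1) j, u k j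
          = u (i + 1) j + ∑ k ∈ Icc (i + 2) j, u k j := sum_bot' (by omega) _
      have e3 : ∑ k ∈ Icc (j + 1) (m + 2), (u i k + u (j + 1) k)
          = (∑ k ∈ Icc (j + 1) (m + 2), u i k)
            + ∑ k ∈ Icc (j + 1) (m + 2), u (j + 1) k := Finset.sum_add_distrib
      have e4 : ∑ k ∈ Icc (j + 1) (m + 2), (u (i + 1) k + u (j + 1) k)
          = (∑ k ∈ Icc (j + 1) (m + 2), u (i + 1) k)
            + ∑ k ∈ Icc (j + 1) (m + 2), u (j + 1) k := Finset.sum_add_distrib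
      have e5 : ∑ k ∈ Icc j (m + 2), u i k
          = u i j + ∑ k ∈ Icc (j + 1) (m + 2), u i k := sum_bot' (by omega) _
      constructor <;> intro h <;> linarith
  · -- part (b)
    intro i j hi hij hj
    rw [h1] at hj
    simp only [psiD, h1, h2, Nat.add_assoc, Nat.reduceAdd]
    have hjm : j ≤ m + 1 := by omega
    rcases eq_or_lt_of_le hjm with rfl | hj'
    · -- j = m + 1
      simp only [eq_self_iff_true, if_true]
      rw [if_neg (show ¬(m + 1 = m + 2) by omega)]
      have g1 : ∑ k ∈ Icc i (m + 3), lam k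
          = (∑ k ∈ Icc i (m + 2), lam k) + lam (m + 3) :=
        sum_top' (a := i) (b := m + 2) (by omega) lam
      have g2 : ∑ k ∈ Icc i (m + 2), lam k
          = (∑ k ∈ Icc i (m + 1), lam k) + lam (m + 2) :=
        sum_top' (a := i) (b := m + 1) (by omega) lam
      have g3 : ∑ k ∈ Icc (m + 2) (m + 1), lam k = 0 := by
        rw [Finset.Icc_eq_empty (by omega), Finset.sum_empty]
      have g3' : ∑ k ∈ Icc (m + 3) (m + 1), lam k = 0 := by
        rw [Finset.Icc_eq_empty (by omega), Finset.sum_empty]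
      have g3'' : ∑ k ∈ Icc (m + 3) (m + 2), u (m + 2) k = 0 := by
        rw [Finset.Icc_eq_empty (by omega), Finset.sum_empty]
      have g3''' : ∑ k ∈ Icc (m + 3) (m + 2), u (m + 3) k = 0 := by
        rw [Finset.Icc_eq_empty (by omega), Finset.sum_empty]
      have g4 : ∑ k ∈ Icc (m + 2) (m + 2), (u i k + u (m + 2) k)
          = u i (m + 2) + u (m + 2) (m + 2) := by
        rw [Finset.Icc_self, Finset.sum_singleton]
      have g5 : ∑ k ∈ Icc (i + 1) (m + 2), u k (m + 2)
          = (∑ k ∈ Icc (i + 1) (m + 1), u k (m + 2)) + u (m + 2) (m + 2) :=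
        sum_top' (a := i + 1) (b := m + 1) (by omega) _
      have g6 : ∑ k ∈ Icc i (m + 1), u k (m + 1)
          = u i (m + 1) + ∑ k ∈ Icc (i + 1) (m + 1), u k (m + 1) :=
        sum_bot' (by omega) _
      constructor <;> intro h <;> linarith
    · -- j < m + 1
      rw [if_neg (show ¬(j + 1 = m + 2) by omega), if_neg (show ¬(j = m + 2) by omega)]
      have f1 : ∑ k ∈ Icc (j + 1) (m + 1), lam k
          = lam (j + 1) + ∑ k ∈ Icc (j + 2) (m + 1), lam k := sum_bot' (by omega) lam
      have f2 : ∑ k ∈ Icc (j + 1) (m + 2), (u i k + u (j + 1) k)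
          = (∑ k ∈ Icc (j + 1) (m + 2), u i k)
            + ∑ k ∈ Icc (j + 1) (m + 2), u (j + 1) k := Finset.sum_add_distrib
      have f3 : ∑ k ∈ Icc (j + 1) (m + 2), u i k
          = u i (j + 1) + ∑ k ∈ Icc (j + 2) (m + 2), u i k := sum_bot' (by omega) _
      have f4 : ∑ k ∈ Icc (j + 1) (m + 2), u (j + 1) k
          = u (j + 1) (j + 1) + ∑ k ∈ Icc (j + 2) (m + 2), u (j + 1) k :=
        sum_bot' (by omega) _
      have f5 : ∑ k ∈ Icc (j + 2) (m + 2), (u i k + u (j + 2) k)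
          = (∑ k ∈ Icc (j + 2) (m + 2), u i k)
            + ∑ k ∈ Icc (j + 2) (m + 2), u (j + 2) k := Finset.sum_add_distrib
      have f6 : ∑ k ∈ Icc (i + 1) (j + 1), u k (j + 1)
          = (∑ k ∈ Icc (i + 1) j, u k (j + 1)) + u (j + 1) (j + 1) :=
        sum_top' (a := i + 1) (b := j) (by omega) _
      have f7 : ∑ k ∈ Icc i j, u k j
          = u i j + ∑ k ∈ Icc (i + 1) j, u k j := sum_bot' (by omega) _
      constructor <;> intro h <;> linarith
  · -- part (c)
    simp only [psiD, h1, h2, Nat.add_assoc, Nat.reduceAdd, eq_self_iff_true, if_true]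
    have c1 : ∑ k ∈ Icc (m + 2) (m + 1), lam k = 0 := by
      rw [Finset.Icc_eq_empty (by omega), Finset.sum_empty]
    have c2 : ∑ k ∈ Icc (m + 3) (m + 1), lam k = 0 := by
      rw [Finset.Icc_eq_empty (by omega), Finset.sum_empty]
    have c3 : ∑ k ∈ Icc (m + 3) (m + 2), u k (m + 2) = 0 := by
      rw [Finset.Icc_eq_empty (by omega), Finset.sum_empty]
    constructor <;> intro h <;> linarith
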